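/- Let GHZ₄^± = (|0000⟩ ± |1111⟩)/√2 be 4-qubit states (unit vectors indexed by Fin 4 → Fin 2), and let ρ = (3/4)|GHZ₄⁺⟩⟨GHZ₄⁺| + (1/4)|GHZ₄⁻⟩⟨GHZ₄⁻|. Then tr ρ² = 5/8, and for every subsystem i : Fin 4 the one-qubit reduced density matrix ρ_i equals (1/2)·I₂, so tr (ρ_i)² = 1/2 < tr ρ². Consequently ρ is genuinely multipartite entangled: for every nonempty proper subset S of Fin 4, ρ is not separable across the bipartition (S, Sᶜ). -/

import Mathlib

open scoped ComplexOrder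

noncomputable section

/-- Extend an assignment `g` on the indices other than `j` by the value `x` at position `j`. -/
def insertAt {N d : ℕ} (j : Fin N) (x : Fin d) (g : {i : Fin N // i ≠ j} → Fin d) :
    Fin N → Fin d :=
  fun i => if h : i = j then x else g ⟨i, h⟩

/-- The one-qudit reduced density matrix at site `j`. -/
def reduced {N d : ℕ} (ρ : Matrix (Fin N → Fin d) (Fin N → Fin d) ℂ) (j : Fin N) :
    Matrix (Fin d) (Fin d) ℂ :=
  Matrix.of fun x y => ∑ g : {i : Fin N // i ≠ j} → Fin d,
    ρ (insertAt j x g) (insertAt j y g)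

/-- The pure-state density matrix `|Φ⟩⟨Φ|`. -/
def pureMat {α : Type*} (Φ : α → ℂ) : Matrix α α ℂ :=
  Matrix.of fun a b => Φ a * (starRingEnd ℂ) (Φ b)

/-- Separability of an `N`-partite state across the bipartition `(S, Sᶜ)`. -/
def SepAcross {N d : ℕ} (S : Finset (Fin N))
    (ρ : Matrix (Fin N → Fin d) (Fin N → Fin d) ℂ) : Prop :=
  ∃ (m : ℕ) (p : Fin m → ℝ)
    (A : Fin m → Matrix ({i : Fin N // i ∈ S} → Fin d) ({i : Fin N // i ∈ S} → Fin d) ℂ)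
    (B : Fin m → Matrix ({i : Fin N // i ∉ S} → Fin d) ({i : Fin N // i ∉ S} → Fin d) ℂ),
    (∀ i, 0 ≤ p i) ∧ (∑ i, p i = 1) ∧
    (∀ i, (A i).PosSemidef ∧ (A i).trace = 1) ∧
    (∀ i, (B i).PosSemidef ∧ (B i).trace = 1) ∧
    (∀ a b : Fin N → Fin d,
      ρ a b = ∑ i, (p i : ℂ)
        * A i (fun k => a k.1) (fun k => b k.1)
        * B i (fun k => a k.1) (fun k => b k.1))

/-- The 4-qubit GHZ state `GHZ₄⁺ = (|0000⟩ + |1111⟩)/√2`. -/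
def ghz4p : (Fin 4 → Fin 2) → ℂ :=
  fun a => if a = (fun _ => 0) then (Real.sqrt 2 : ℂ)⁻¹
    else if a = (fun _ => 1) then (Real.sqrt 2 : ℂ)⁻¹ else 0

/-- The 4-qubit GHZ state `GHZ₄⁻ = (|0000⟩ − |1111⟩)/√2`. -/
def ghz4m : (Fin 4 → Fin 2) → ℂ :=
  fun a => if a = (fun _ => 0) then (Real.sqrt 2 : ℂ)⁻¹
    else if a = (fun _ => 1) then -(Real.sqrt 2 : ℂ)⁻¹ else 0

/-!
In the basis `|0000⟩, |1111⟩` the state `ρ` has diagonal entries `1/2` and coherence `1/4`, and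
nothing else; tracing out three qubits destroys the coherence, leaving `I₂ / 2`.

If `ρ` were separable across `(S, Sᶜ)`, let `c` be the basis vector equal to `0` on `S` and `1`
off `S`. Then `ρ(c, c) = 0` is a sum of nonnegative terms `pᵢ Aᵢ(0, 0) Bᵢ(1, 1)`, so each of them
vanishes. A positive semidefinite matrix with a zero diagonal entry has a zero row and column, so
every term `pᵢ Aᵢ(0, 1) Bᵢ(0, 1)` of `ρ(0000, 1111)` vanishes too, contradicting the coherence `1/4`.
-/

open Matrix

namespace Matrix.PosSemidef

variable {n 𝕜 : Type*} [Fintype n] [RCLike 𝕜] {A : Matrix n n 𝕜}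

theorem apply_eq_zero_of_diag_eq_zero_right (hA : A.PosSemidef) {i : n} (hi : A i i = 0)
    (j : n) : A j i = 0 := by
  classical
  have hcol : A *ᵥ Pi.single i 1 = 0 :=
    (hA.dotProduct_mulVec_zero_iff _).mp (by simpa [mulVec_single_one] using hi)
  simpa [mulVec_single_one] using congrFun hcol j

theorem apply_eq_zero_of_diag_eq_zero_left (hA : A.PosSemidef) {i : n} (hi : A i i = 0)
    (j : n) : A i j = 0 := by
  rw [← hA.isHermitian.apply, hA.apply_eq_zero_of_diag_eq_zero_right hi, star_zero]

end Matrix.PosSemidef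

theorem SepAcross.apply_eq_zero_of_piecewise {N d : ℕ} {S : Finset (Fin N)}
    {ρ : Matrix (Fin N → Fin d) (Fin N → Fin d) ℂ} (hρ : SepAcross S ρ) (a b : Fin N → Fin d)
    (hab : ρ (S.piecewise a b) (S.piecewise a b) = 0) : ρ a b = 0 := by
  obtain ⟨m, p, A, B, hp, -, hA, hB, hρ⟩ := hρ
  have hS : (fun k : {i // i ∈ S} => S.piecewise a b k) = fun k => a k.1 := by
    funext k; simp [k.2]
  have hSc : (fun k : {i // i ∉ S} => S.piecewise a b k) = fun k => b k.1 := by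
    funext k; simp [k.2]
  rw [hρ, hS, hSc] at hab
  have hterm := (Finset.sum_eq_zero_iff_of_nonneg fun i _ => mul_nonneg
    (mul_nonneg (by exact_mod_cast hp i) (hA i).1.diag_nonneg) (hB i).1.diag_nonneg).mp hab
  refine (hρ a b).trans (Finset.sum_eq_zero fun i _ => ?_)
  rcases mul_eq_zero.mp (hterm i (Finset.mem_univ i)) with h | h
  · rcases mul_eq_zero.mp h with h | h
    · simp [h]
    · simp [(hA i).1.apply_eq_zero_of_diag_eq_zero_left h]
  · simp [(hB i).1.apply_eq_zero_of_diag_eq_zero_right h]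

theorem insertAt_eq_iff {N d : ℕ} {j : Fin N} {x : Fin d} {g : {i : Fin N // i ≠ j} → Fin d}
    {a : Fin N → Fin d} : insertAt j x g = a ↔ x = a j ∧ g = fun i => a i.1 := by
  constructor
  · rintro rfl
    exact ⟨by simp [insertAt], funext fun i => by simp [insertAt, i.2]⟩
  · rintro ⟨rfl, rfl⟩
    funext i
    by_cases h : i = j <;> simp [insertAt, h]

section reduced

variable {N d : ℕ} (j : Fin N)

theorem reduced_add (ρ σ : Matrix (Fin N → Fin d) (Fin N → Fin d) ℂ) :
    reduced (ρ + σ) j = reduced ρ j + reduced σ j := by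
  ext x y; simp [reduced, Finset.sum_add_distrib]

theorem reduced_single_of_eq {a b : Fin N → Fin d} (hab : ∀ i ≠ j, a i = b i) (c : ℂ) :
    reduced (single a b c) j = single (a j) (b j) c := by
  have hres : (fun i : {i // i ≠ j} => b i.1) = fun i => a i.1 := funext fun i => (hab i i.2).symm
  ext x y
  simp only [reduced, single, of_apply, eq_comm (a := a), eq_comm (a := b),
    insertAt_eq_iff, hres]
  rw [Finset.sum_congr rfl fun g _ => if_congr
    (show _ ↔ g = (fun i => a i.1) ∧ (a j = x ∧ b j = y) by tauto) rfl rfl]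
  simp only [ite_and, Finset.sum_ite_eq', Finset.mem_univ, if_true]

theorem reduced_single_of_ne {a b : Fin N → Fin d} {i : Fin N} (hij : i ≠ j) (hab : a i ≠ b i)
    (c : ℂ) : reduced (single a b c) j = 0 := by
  ext x y
  refine Finset.sum_eq_zero fun g _ => single_apply_of_ne _ _ _ _ _ ?_
  rintro ⟨rfl, rfl⟩
  simp [insertAt, hij] at hab

end reduced

section ghzXState

variable {N : ℕ}

/-- The constant assignments `0` and `1` are the basis vectors `|0…0⟩` and `|1…1⟩`. -/
def ghzXState (N : ℕ) (p c : ℂ) : Matrix (Fin N → Fin 2) (Fin N → Fin 2) ℂ :=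
  single 0 0 p + single 1 1 p + single 0 1 c + single 1 0 c

theorem trace_ghzXState_mul_self [NeZero N] (p c : ℂ) :
    (ghzXState N p c * ghzXState N p c).trace = 2 * (p ^ 2 + c ^ 2) := by
  have h : (0 : Fin N → Fin 2) ≠ 1 := fun h => zero_ne_one (congrFun h 0)
  simp only [ghzXState, mul_add, add_mul, single_mul_single_same, ne_eq, h, h.symm,
    not_false_eq_true, single_mul_single_of_ne, add_zero, zero_add, trace_add,
    trace_single_eq_same, trace_single_eq_of_ne]
  ring

theorem reduced_ghzXState (hN : 1 < N) (p c : ℂ) (j : Fin N) :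
    reduced (ghzXState N p c) j = p • 1 := by
  obtain ⟨i, hij⟩ : ∃ i : Fin N, i ≠ j := by
    simpa using Fintype.exists_ne_of_one_lt_card (by simpa using hN) j
  have h01 : (0 : Fin N → Fin 2) i ≠ (1 : Fin N → Fin 2) i := zero_ne_one
  simp only [ghzXState, reduced_add, reduced_single_of_eq j fun _ _ => rfl,
    reduced_single_of_ne j hij h01, reduced_single_of_ne j hij h01.symm, add_zero]
  ext x y
  fin_cases x <;> fin_cases y <;> simp

theorem not_sepAcross_ghzXState {S : Finset (Fin N)} (hS : S.Nonempty) (hSu : S ≠ Finset.univ)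
    (p : ℂ) {c : ℂ} (hc : c ≠ 0) : ¬ SepAcross S (ghzXState N p c) := by
  intro hsep
  obtain ⟨k₀, hk₀⟩ := hS
  obtain ⟨k₁, hk₁⟩ := by simpa [Finset.eq_univ_iff_forall] using hSu
  have : NeZero N := ⟨by rintro rfl; exact k₀.elim0⟩
  have h : (0 : Fin N → Fin 2) ≠ 1 := fun h => zero_ne_one (congrFun h 0)
  have hpw0 : S.piecewise (0 : Fin N → Fin 2) 1 ≠ 0 := fun h' => by
    simpa [hk₁] using congrFun h' k₁
  have hpw1 : S.piecewise (0 : Fin N → Fin 2) 1 ≠ 1 := fun h' => by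
    simpa [hk₀] using congrFun h' k₀
  apply hc
  simpa [ghzXState, h, h.symm] using hsep.apply_eq_zero_of_piecewise 0 1
    (by simp [ghzXState, single_apply_of_row_ne hpw0.symm, single_apply_of_row_ne hpw1.symm])

end ghzXState

theorem ghz4_mixture_eq :
    (3 / 4 : ℂ) • pureMat ghz4p + (1 / 4 : ℂ) • pureMat ghz4m = ghzXState 4 2⁻¹ 4⁻¹ := by
  have hsqrt : (Real.sqrt 2 : ℂ)⁻¹ * (Real.sqrt 2 : ℂ)⁻¹ = 2⁻¹ := by
    rw [← mul_inv, ← Complex.ofReal_mul, Real.mul_self_sqrt zero_le_two]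
    norm_num
  have h01 : (0 : Fin 4 → Fin 2) ≠ 1 := fun h => zero_ne_one (congrFun h 0)
  ext a b
  simp only [ghzXState, pureMat, ghz4p, ghz4m, Matrix.add_apply, Matrix.smul_apply, Matrix.single,
    of_apply, ← Pi.zero_def, ← Pi.one_def, eq_comm (b := a), eq_comm (b := b)]
  by_cases ha0 : a = 0 <;> by_cases ha1 : a = 1 <;> by_cases hb0 : b = 0 <;>
    by_cases hb1 : b = 1 <;> simp_all [Complex.conj_ofReal] <;> norm_num

/-- The mixture `ρ = (3/4)|GHZ₄⁺⟩⟨GHZ₄⁺| + (1/4)|GHZ₄⁻⟩⟨GHZ₄⁻|` has purity `5/8`, all of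
its one-qubit reductions are maximally mixed (purity `1/2 < 5/8`), and it is genuinely
multipartite entangled: not separable across any nontrivial bipartition. -/
theorem ghz4_mixture_genuinely_entangled
    (ρ : Matrix (Fin 4 → Fin 2) (Fin 4 → Fin 2) ℂ)
    (hρ : ρ = (3 / 4 : ℂ) • pureMat ghz4p + (1 / 4 : ℂ) • pureMat ghz4m) :
    ((ρ * ρ).trace = 5 / 8) ∧
    (∀ i : Fin 4, reduced ρ i = (2 : ℂ)⁻¹ • 1) ∧
    (∀ i : Fin 4, (reduced ρ i * reduced ρ i).trace = (2 : ℂ)⁻¹ ∧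
      (reduced ρ i * reduced ρ i).trace < (ρ * ρ).trace) ∧
    (∀ S : Finset (Fin 4), S.Nonempty → S ≠ Finset.univ → ¬ SepAcross S ρ) := by
  rw [hρ, ghz4_mixture_eq]
  have hpurity : (ghzXState 4 2⁻¹ 4⁻¹ * ghzXState 4 2⁻¹ 4⁻¹).trace = 5 / 8 := by
    rw [trace_ghzXState_mul_self]
    norm_num
  have hred : ∀ i : Fin 4, reduced (ghzXState 4 2⁻¹ 4⁻¹) i = (2 : ℂ)⁻¹ • 1 :=
    reduced_ghzXState (by norm_num) _ _
  have hred_purity :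
      ((2 : ℂ)⁻¹ • (1 : Matrix (Fin 2) (Fin 2) ℂ) * (2 : ℂ)⁻¹ • 1).trace = 2⁻¹ := by
    simp
  refine ⟨hpurity, hred, fun i => ?_,
    fun S hS hSu => not_sepAcross_ghzXState hS hSu _ (by norm_num)⟩
  rw [hred, hred_purity, hpurity]
  exact ⟨rfl, by norm_num [Complex.lt_def]⟩
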